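/- Let n ≥ 1, let A : Fin n → Fin n → Prop be a Boolean matrix, let U, V, W : {1,…,n} → Fin n → Prop be query vectors, and fix a stage given by 1 ≤ j ≤ n and 1 ≤ a ≤ n. Let G_{j,a} be the graph obtained from the query-gadget graph with current query index ℓ = j (vertex set {0,1,2,3} × Fin n × {0,…,n}; path edges (g,i,c) ~ (g,i,c+1) for 1 ≤ c ≤ n−1; query edges (g,i,0) ~ (g,i,q) for 1 ≤ q ≤ j whenever U q i for g ∈ {0,3}, V q i for g = 1, W q i for g = 2; cross edges (0,i,n) ~ (1,i',0) if A i i', (1,i',n) ~ (2,i'',0) if A i' i'', (2,i'',n) ~ (3,i''',0) if A i'' i''') by adding 2n² vertices s_{p,b} and t_{p,b} (p,b ∈ {1,…,n}) forming two paths in lexicographic order (s_{p,b} ~ s_{p,b+1} for b < n and s_{p,n} ~ s_{p+1,1} for p < n, and likewise for the t-vertices), together with the edges s_{p,b} ~ (0,b,0) and t_{p,b} ~ (3,b,n) for every pair (p,b) such that either p < j and 1 ≤ b ≤ n, or p = j and 1 ≤ b ≤ a. Then: (a) the extended distance in G_{j,a} (valued in ℕ∞) from s_{n,n} to t_{n,n}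 is at least 2n(n−j) + 2(n−a+1) + 3 + 4(n+1−j); and (b) it equals this value if and only if there exist b, c with U j a, V j b, W j c, A a b, A b c and A c a. -/

import Mathlib

/-!
Give every vertex a potential that changes by at most one along each edge, is `0` at
`s_{n,n}` and `D = 2n(n−j) + 2(n−a+1) + 3 + 4(n+1−j)` at `t_{n,n}`: on the source path it is
the distance from `s_{n,n}`, capped just past `s_{j,a}`; on gadget layer `g` it grows from
layer to layer and, within a layer, rises by one per step once the position `c` reaches `j`;
the sink path mirrors the source path. This gives the lower bound. A walk of length exactly
`D` must raise the potential at every step, and the only such steps run along the source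
path down to `s_{j,a}`, into `(0,a,0)`, along a query edge of query `j` and down its row in
each layer, across an `A`-edge to the next layer, and from `(3,a,n)` out to `t_{j,a}`. So the
walk traces a triangle `a → b → c → a` accepted by query `j`; conversely such a triangle gives
a walk of length `D` along that route.
-/

namespace Nat

theorem mul_add_le_mul_add_iff {n u v x y : ℕ} (hx : x < n) (hy : y < n) :
    n * u + x ≤ n * v + y ↔ u < v ∨ u = v ∧ x ≤ y := by
  have key {u v : ℕ} (huv : u < v) : n * u + n ≤ n * v := by
    simpa [Nat.mul_succ] using Nat.mul_le_mul_left n (Nat.succ_le_of_lt huv)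
  constructor
  · intro h
    rcases lt_trichotomy u v with huv | rfl | huv
    · exact .inl huv
    · exact .inr ⟨rfl, by omega⟩
    · have := key huv; omega
  · rintro (huv | ⟨rfl, hxy⟩)
    · have := key huv; omega
    · omega

theorem mul_add_eq_mul_add_iff {n u v x y : ℕ} (hx : x < n) (hy : y < n) :
    n * u + x = n * v + y ↔ u = v ∧ x = y := by
  rw [le_antisymm_iff, mul_add_le_mul_add_iff hx hy, mul_add_le_mul_add_iff hy hx]
  omega

end Nat

namespace SimpleGraph

variable {V : Type*} {G : SimpleGraph V} {f : V → ℕ} {u v w : V}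

def TightAdj (G : SimpleGraph V) (f : V → ℕ) (x y : V) : Prop :=
  G.Adj x y ∧ f y = f x + 1

theorem edist_le_add {k l : ℕ∞} (h₁ : G.edist u v ≤ k) (h₂ : G.edist v w ≤ l) :
    G.edist u w ≤ k + l :=
  G.edist_triangle.trans (add_le_add h₁ h₂)

theorem Adj.edist_le_one (h : G.Adj u v) : G.edist u v ≤ 1 :=
  edist_le_one_iff_adj_or_eq.mpr (.inl h)

theorem edist_le_of_adj_succ (φ : ℕ → V) (m : ℕ) (h : ∀ k < m, G.Adj (φ k) (φ (k + 1))) :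
    G.edist (φ 0) (φ m) ≤ m := by
  induction m with
  | zero => simp
  | succ m ih =>
    have := edist_le_add (ih fun k hk => h k (by omega)) (h m (by omega)).edist_le_one
    exact_mod_cast this

theorem Walk.le_add_length (hf : ∀ ⦃x y⦄, G.Adj x y → f y ≤ f x + 1) (p : G.Walk u v) :
    f v ≤ f u + p.length := by
  induction p with
  | nil => simp
  | cons h p ih => have := hf h; simp only [Walk.length_cons]; omega

theorem le_add_edist (hf : ∀ ⦃x y⦄, G.Adj x y → f y ≤ f x + 1) (u v : V) :
    (f v : ℕ∞) ≤ f u + G.edist u v := by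
  by_cases h : G.Reachable u v
  · obtain ⟨p, hp⟩ := h.exists_walk_length_eq_edist
    rw [← hp]
    exact_mod_cast p.le_add_length hf
  · simp [edist_eq_top_of_not_reachable h]

theorem Walk.reflTransGen_tightAdj (hf : ∀ ⦃x y⦄, G.Adj x y → f y ≤ f x + 1)
    (p : G.Walk u v) (hp : f u + p.length = f v) :
    Relation.ReflTransGen (G.TightAdj f) u v := by
  induction p with
  | nil => exact .refl
  | cons h p ih =>
    have hstep := hf h
    have hrest := p.le_add_length hf
    simp only [Walk.length_cons] at hp
    exact .head ⟨h, by omega⟩ (ih (by omega))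

theorem reflTransGen_tightAdj_of_edist_eq (hf : ∀ ⦃x y⦄, G.Adj x y → f y ≤ f x + 1) {k : ℕ}
    (hk : G.edist u v = k) (h : f u + k = f v) :
    Relation.ReflTransGen (G.TightAdj f) u v := by
  obtain ⟨p, hp⟩ := exists_walk_of_edist_eq_coe hk
  exact p.reflTransGen_tightAdj hf (hp ▸ h)

end SimpleGraph

namespace OMv3Reduction

/-- `inl (g, i, c)` is the gadget vertex `(g, i+1, c)`; `inr (inl (p, b))` and
`inr (inr (p, b))` are `s_{p+1,b+1}` and `t_{p+1,b+1}`. -/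
abbrev Vertex (n : ℕ) := (Fin 4 × Fin n × Fin (n + 1)) ⊕ ((Fin n × Fin n) ⊕ (Fin n × Fin n))

variable {n : ℕ}

/-- The number of steps from `s_{n,n}` back to `s_{p+1,b+1}` along the lexicographic path. -/
def pathRank : Fin n × Fin n ≃ Fin (n * n) :=
  (Equiv.prodCongr Fin.revPerm Fin.revPerm).trans finProdFinEquiv

theorem pathRank_val (p : Fin n × Fin n) :
    (pathRank p : ℕ) = n * (n - 1 - p.1) + (n - 1 - p.2) := by
  simp only [pathRank, Equiv.trans_apply, Equiv.prodCongr_apply, Prod.map, Fin.revPerm_apply,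
    finProdFinEquiv_apply_val, Fin.val_rev, Nat.sub_sub, add_comm 1]
  ring

theorem lexSucc_iff_pathRank (p q : Fin n × Fin n) :
    (p.1 = q.1 ∧ (q.2 : ℕ) = p.2 + 1 ∨ (p.2 : ℕ) = n - 1 ∧ (q.2 : ℕ) = 0 ∧ (q.1 : ℕ) = p.1 + 1) ↔
      (pathRank q : ℕ) + 1 = pathRank p := by
  rw [pathRank_val, pathRank_val]
  have := p.1.isLt; have := p.2.isLt; have := q.1.isLt; have := q.2.isLt
  constructor
  · rintro (⟨h₁, h₂⟩ | ⟨h₁, h₂, h₃⟩)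
    · rw [h₁]; omega
    · rw [show n - 1 - (p.1 : ℕ) = (n - 1 - q.1) + 1 by omega, Nat.mul_succ]; omega
  · intro h
    by_cases hp : (p.2 : ℕ) < n - 1
    · have := (Nat.mul_add_eq_mul_add_iff (n := n) (u := n - 1 - q.1) (v := n - 1 - p.1)
        (x := n - 1 - q.2) (y := n - 1 - p.2 - 1) (by omega) (by omega)).mp (by omega)
      exact .inl ⟨Fin.ext (by omega), by omega⟩
    · by_cases hq : (q.2 : ℕ) = 0
      · have h' : n * (n - 1 - q.1 + 1) = n * (n - 1 - p.1) := by rw [Nat.mul_succ]; omega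
        have := Nat.eq_of_mul_eq_mul_left (by omega) h'
        exact .inr ⟨by omega, hq, by omega⟩
      · have := (Nat.mul_add_eq_mul_add_iff (n := n) (u := n - 1 - q.1) (v := n - 1 - p.1)
          (x := n - q.2) (y := 0) (by omega) (by omega)).mp (by omega)
        omega

/-- The rank of `s_{j,a}`. -/
def pivotRank (n j a : ℕ) : ℕ := n * (n - j) + (n - a)

theorem pivotRank_le_iff {j a : ℕ} (hjn : j ≤ n) (ha1 : 1 ≤ a) (p : Fin n × Fin n) :
    ((p.1 : ℕ) + 1 < j ∨ (p.1 : ℕ) + 1 = j ∧ (p.2 : ℕ) + 1 ≤ a) ↔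
      pivotRank n j a ≤ pathRank p := by
  have := p.1.isLt; have := p.2.isLt
  rw [pathRank_val, pivotRank, Nat.mul_add_le_mul_add_iff (by omega) (by omega)]
  omega

theorem snd_eq_of_pathRank_eq_pivotRank {j a : ℕ} (ha1 : 1 ≤ a) (han : a ≤ n)
    {p : Fin n × Fin n} (h : (pathRank p : ℕ) = pivotRank n j a) : (p.2 : ℕ) = a - 1 := by
  rw [pathRank_val, pivotRank] at h
  have := (Nat.mul_add_eq_mul_add_iff (by omega) (by omega)).mp h
  omega

inductive GadgetEdge (A : Fin n → Fin n → Prop) (Q : Fin 4 → ℕ → Fin n → Prop) (j : ℕ) :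
    Fin 4 × Fin n × Fin (n + 1) → Fin 4 × Fin n × Fin (n + 1) → Prop
  | path {g : Fin 4} {i : Fin n} {c c' : Fin (n + 1)} :
      1 ≤ (c : ℕ) → (c' : ℕ) = c + 1 → GadgetEdge A Q j (g, i, c) (g, i, c')
  | query {g : Fin 4} {i : Fin n} {c c' : Fin (n + 1)} :
      (c : ℕ) = 0 → 1 ≤ (c' : ℕ) → (c' : ℕ) ≤ j → Q g c' i → GadgetEdge A Q j (g, i, c) (g, i, c')
  | cross {g g' : Fin 4} {i i' : Fin n} {c c' : Fin (n + 1)} :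
      (g' : ℕ) = g + 1 → (c : ℕ) = n → (c' : ℕ) = 0 → A i i' →
        GadgetEdge A Q j (g, i, c) (g', i', c')

inductive StageEdge (A : Fin n → Fin n → Prop) (Q : Fin 4 → ℕ → Fin n → Prop) (j L : ℕ) :
    Vertex n → Vertex n → Prop
  | gadget {x y} : GadgetEdge A Q j x y → StageEdge A Q j L (.inl x) (.inl y)
  | source {p q} : (pathRank q : ℕ) + 1 = pathRank p →
      StageEdge A Q j L (.inr (.inl p)) (.inr (.inl q))
  | sink {p q} : (pathRank q : ℕ) + 1 = pathRank p →
      StageEdge A Q j L (.inr (.inr p)) (.inr (.inr q))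
  | sourceLink {p b} {g : Fin 4} {c : Fin (n + 1)} : (g : ℕ) = 0 → (c : ℕ) = 0 →
      L ≤ pathRank (p, b) → StageEdge A Q j L (.inr (.inl (p, b))) (.inl (g, b, c))
  | sinkLink {p b} {g : Fin 4} {c : Fin (n + 1)} : (g : ℕ) = 3 → (c : ℕ) = n →
      L ≤ pathRank (p, b) → StageEdge A Q j L (.inr (.inr (p, b))) (.inl (g, b, c))

abbrev stageGraph (A : Fin n → Fin n → Prop) (Q : Fin 4 → ℕ → Fin n → Prop) (j L : ℕ) :
    SimpleGraph (Vertex n) :=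
  .fromRel (StageEdge A Q j L)

theorem queryVec_iff (U Vq Wq : ℕ → Fin n → Prop) (g : Fin 4) (q : ℕ) (i : Fin n) :
    ((((g : ℕ) = 0 ∨ (g : ℕ) = 3) → U q i) ∧ ((g : ℕ) = 1 → Vq q i) ∧ ((g : ℕ) = 2 → Wq q i)) ↔
      ![U, Vq, Wq, U] g q i := by
  fin_cases g <;> simp

theorem fromRel_eq_stageGraph (A : Fin n → Fin n → Prop) (U Vq Wq : ℕ → Fin n → Prop) {j a : ℕ}
    (hjn : j ≤ n) (ha1 : 1 ≤ a) :
    SimpleGraph.fromRel (fun x y =>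
      (∃ x' y' : Fin 4 × Fin n × Fin (n + 1), x = Sum.inl x' ∧ y = Sum.inl y' ∧
        ((x'.1 = y'.1 ∧ x'.2.1 = y'.2.1 ∧ 1 ≤ (x'.2.2 : ℕ) ∧
            (y'.2.2 : ℕ) = (x'.2.2 : ℕ) + 1) ∨
         (x'.1 = y'.1 ∧ x'.2.1 = y'.2.1 ∧ (x'.2.2 : ℕ) = 0 ∧ 1 ≤ (y'.2.2 : ℕ) ∧
            (y'.2.2 : ℕ) ≤ j ∧
            (((x'.1 : ℕ) = 0 ∨ (x'.1 : ℕ) = 3) → U (y'.2.2 : ℕ) x'.2.1) ∧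
            ((x'.1 : ℕ) = 1 → Vq (y'.2.2 : ℕ) x'.2.1) ∧
            ((x'.1 : ℕ) = 2 → Wq (y'.2.2 : ℕ) x'.2.1)) ∨
         ((y'.1 : ℕ) = (x'.1 : ℕ) + 1 ∧ (x'.2.2 : ℕ) = n ∧ (y'.2.2 : ℕ) = 0 ∧
            A x'.2.1 y'.2.1))) ∨
      (∃ p q : Fin n × Fin n, x = Sum.inr (Sum.inl p) ∧ y = Sum.inr (Sum.inl q) ∧
        ((p.1 = q.1 ∧ (q.2 : ℕ) = (p.2 : ℕ) + 1) ∨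
         ((p.2 : ℕ) = n - 1 ∧ (q.2 : ℕ) = 0 ∧ (q.1 : ℕ) = (p.1 : ℕ) + 1))) ∨
      (∃ p q : Fin n × Fin n, x = Sum.inr (Sum.inr p) ∧ y = Sum.inr (Sum.inr q) ∧
        ((p.1 = q.1 ∧ (q.2 : ℕ) = (p.2 : ℕ) + 1) ∨
         ((p.2 : ℕ) = n - 1 ∧ (q.2 : ℕ) = 0 ∧ (q.1 : ℕ) = (p.1 : ℕ) + 1))) ∨
      (∃ pb : Fin n × Fin n, x = Sum.inr (Sum.inl pb) ∧ y = Sum.inl (0, pb.2, 0) ∧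
        ((pb.1 : ℕ) + 1 < j ∨ ((pb.1 : ℕ) + 1 = j ∧ (pb.2 : ℕ) + 1 ≤ a))) ∨
      (∃ pb : Fin n × Fin n, x = Sum.inr (Sum.inr pb) ∧ y = Sum.inl (3, pb.2, Fin.last n) ∧
        ((pb.1 : ℕ) + 1 < j ∨ ((pb.1 : ℕ) + 1 = j ∧ (pb.2 : ℕ) + 1 ≤ a)))) =
      stageGraph A ![U, Vq, Wq, U] j (pivotRank n j a) := by
  refine congrArg SimpleGraph.fromRel (funext₂ fun x y => propext ⟨?_, ?_⟩)
  · rintro (⟨⟨g, i, c⟩, ⟨g', i', c'⟩, rfl, rfl, h⟩ | ⟨p, q, rfl, rfl, h⟩ | ⟨p, q, rfl, rfl, h⟩ |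
      ⟨⟨p, b⟩, rfl, rfl, h⟩ | ⟨⟨p, b⟩, rfl, rfl, h⟩)
    · refine .gadget ?_
      rcases h with ⟨rfl, rfl, h₁, h₂⟩ | ⟨rfl, rfl, h₀, h₁, h₂, hQ⟩ | ⟨hg, hc, hc', hA⟩
      · exact .path h₁ h₂
      · exact .query h₀ h₁ h₂ ((queryVec_iff U Vq Wq g c' i).mp hQ)
      · exact .cross hg hc hc' hA
    · exact .source ((lexSucc_iff_pathRank p q).mp h)
    · exact .sink ((lexSucc_iff_pathRank p q).mp h)
    · exact .sourceLink rfl rfl ((pivotRank_le_iff hjn ha1 _).mp h)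
    · exact .sinkLink rfl rfl ((pivotRank_le_iff hjn ha1 _).mp h)
  · rintro (⟨h⟩ | ⟨h⟩ | ⟨h⟩ | ⟨hg, hc, h⟩ | ⟨hg, hc, h⟩)
    · cases h with
      | path h₁ h₂ => exact .inl ⟨_, _, rfl, rfl, .inl ⟨rfl, rfl, h₁, h₂⟩⟩
      | query h₀ h₁ h₂ hQ =>
        exact .inl ⟨_, _, rfl, rfl, .inr (.inl ⟨rfl, rfl, h₀, h₁, h₂, (queryVec_iff ..).mpr hQ⟩)⟩
      | cross hg hc hc' hA => exact .inl ⟨_, _, rfl, rfl, .inr (.inr ⟨hg, hc, hc', hA⟩)⟩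
    · exact .inr (.inl ⟨_, _, rfl, rfl, (lexSucc_iff_pathRank _ _).mpr h⟩)
    · exact .inr (.inr (.inl ⟨_, _, rfl, rfl, (lexSucc_iff_pathRank _ _).mpr h⟩))
    · exact .inr (.inr (.inr (.inl ⟨_, rfl, by simp [Fin.ext_iff, hg, hc],
        (pivotRank_le_iff hjn ha1 _).mpr h⟩)))
    · exact .inr (.inr (.inr (.inr ⟨_, rfl, by simp [Fin.ext_iff, hg, hc],
        (pivotRank_le_iff hjn ha1 _).mpr h⟩)))

/-- Here `L` is the rank of `s_{j,a}`. Truncated subtraction makes `c + 1 - j` vanish for every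
`c < j` (so also at `c = 0`, as `j ≥ 1`): of the query edges out of `(g, i, 0)` only the one
to `(g, i, j)` raises the potential. -/
def potential (n j L : ℕ) : Vertex n → ℕ
  | .inl (g, _, c) => L + 1 + g * (n - j + 2) + (c + 1 - j)
  | .inr (.inl p) => min (pathRank p : ℕ) (L + 1)
  | .inr (.inr p) => 2 * L + 4 * (n - j + 2) + 1 - min (pathRank p : ℕ) (L + 1)

variable {A : Fin n → Fin n → Prop} {Q : Fin 4 → ℕ → Fin n → Prop} {j L : ℕ}

theorem potential_le_of_stageEdge (hj : 1 ≤ j) (hjn : j ≤ n) {x y : Vertex n}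
    (h : StageEdge A Q j L x y) :
    potential n j L y ≤ potential n j L x + 1 ∧ potential n j L x ≤ potential n j L y + 1 := by
  cases h with
  | gadget e =>
    cases e with
    | path => simp only [potential]; omega
    | query => simp only [potential]; omega
    | @cross g g' _ _ _ _ hg =>
      have : (g' : ℕ) * (n - j + 2) = g * (n - j + 2) + (n - j + 2) := by rw [hg]; ring
      simp only [potential]; omega
  | source | sink => simp only [potential]; omega
  | sourceLink hg hc => simp only [potential, hg, hc, zero_mul]; omega
  | sinkLink hg hc => simp only [potential, hg, hc]; omega

theorem potential_adj_le (hj : 1 ≤ j) (hjn : j ≤ n) {x y : Vertex n}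
    (h : (stageGraph A Q j L).Adj x y) : potential n j L y ≤ potential n j L x + 1 := by
  rcases (SimpleGraph.fromRel_adj _ _ _).mp h with ⟨-, h | h⟩
  · exact (potential_le_of_stageEdge hj hjn h).1
  · exact (potential_le_of_stageEdge hj hjn h).2

abbrev StageTight (A : Fin n → Fin n → Prop) (Q : Fin 4 → ℕ → Fin n → Prop) (j L : ℕ) :
    Vertex n → Vertex n → Prop :=
  (stageGraph A Q j L).TightAdj (potential n j L)

theorem StageTight.stageEdge {x y : Vertex n} (h : StageTight A Q j L x y) :
    (StageEdge A Q j L x y ∨ StageEdge A Q j L y x) ∧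
      potential n j L y = potential n j L x + 1 :=
  ⟨((SimpleGraph.fromRel_adj _ _ _).mp h.1).2, h.2⟩

theorem StageTight.of_source (hj : 1 ≤ j) {p : Fin n × Fin n} {y : Vertex n}
    (h : StageTight A Q j L (.inr (.inl p)) y) :
    (∃ q, y = .inr (.inl q)) ∨ (pathRank p : ℕ) = L ∧ y = .inl (0, p.2, 0) := by
  obtain ⟨e | e, hf⟩ := h.stageEdge
  · cases e with
    | source => exact .inl ⟨_, rfl⟩
    | sourceLink hg hc hL =>
      simp only [potential, hg, hc, zero_mul] at hf
      exact .inr ⟨by omega, by simp [Fin.ext_iff, hg, hc]⟩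
  · cases e with
    | source => exact .inl ⟨_, rfl⟩

theorem StageTight.of_entry (hj : 1 ≤ j) (hjn : j ≤ n) {g : Fin 4} {i : Fin n}
    {c : Fin (n + 1)} (hc : (c : ℕ) = 0) {y : Vertex n}
    (h : StageTight A Q j L (.inl (g, i, c)) y) :
    Q g j i ∧ ∃ c' : Fin (n + 1), (c' : ℕ) = j ∧ y = .inl (g, i, c') := by
  obtain ⟨e | e, hf⟩ := h.stageEdge
  · cases e with
    | gadget e =>
      cases e with
      | path => omega
      | @query _ _ _ c' _ _ _ hQ =>
        simp only [potential] at hf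
        obtain rfl : (c' : ℕ) = j := by omega
        exact ⟨hQ, c', rfl, rfl⟩
      | cross => omega
  · cases e with
    | gadget e =>
      cases e with
      | path | query => omega
      | @cross g₀ _ _ _ _ _ hg =>
        have : (g : ℕ) * (n - j + 2) = g₀ * (n - j + 2) + (n - j + 2) := by rw [hg]; ring
        simp only [potential] at hf
        omega
    | sourceLink hg => simp only [potential, hg, zero_mul] at hf; omega
    | sinkLink => omega

theorem StageTight.of_row (hj : 1 ≤ j) (hjn : j ≤ n) {g : Fin 4} {i : Fin n}
    {c : Fin (n + 1)} (hc : 1 ≤ (c : ℕ)) {y : Vertex n}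
    (h : StageTight A Q j L (.inl (g, i, c)) y) :
    (∃ c' : Fin (n + 1), 1 ≤ (c' : ℕ) ∧ y = .inl (g, i, c')) ∨
      (∃ (g' : Fin 4) (i' : Fin n), (g' : ℕ) = g + 1 ∧ A i i' ∧ y = .inl (g', i', 0)) ∨
      (g : ℕ) = 3 ∧ ∃ p, (pathRank (p, i) : ℕ) = L := by
  obtain ⟨e | e, hf⟩ := h.stageEdge
  · cases e with
    | gadget e =>
      cases e with
      | path _ h₂ => exact .inl ⟨_, by omega, rfl⟩
      | query => omega
      | cross hg _ hc' hA => exact .inr (.inl ⟨_, _, hg, hA, by simp [Fin.ext_iff, hc']⟩)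
  · cases e with
    | gadget e =>
      cases e with
      | path | query => simp only [potential] at hf; omega
      | cross => omega
    | sourceLink => omega
    | @sinkLink p _ _ _ hg _ hL =>
      simp only [potential, hg] at hf
      exact .inr (.inr ⟨hg, p, by omega⟩)

section Reach

open Relation

variable {z : Fin n × Fin n}

theorem reach_entry_of_reach_source (hj : 1 ≤ j) {p : Fin n × Fin n}
    (h : ReflTransGen (StageTight A Q j L) (.inr (.inl p)) (.inr (.inr z))) :
    ∃ b : Fin n, (∃ p', (pathRank (p', b) : ℕ) = L) ∧
      ReflTransGen (StageTight A Q j L) (.inl (0, b, 0)) (.inr (.inr z)) := by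
  generalize hx : (.inr (.inl p) : Vertex n) = x at h
  induction h using ReflTransGen.head_induction_on generalizing p with
  | refl => cases hx
  | head hxy hyz ih =>
    subst hx
    rcases hxy.of_source hj with ⟨q, rfl⟩ | ⟨hp, rfl⟩
    · exact ih rfl
    · exact ⟨p.2, ⟨p.1, hp⟩, hyz⟩

theorem reach_cross_of_reach_row (hj : 1 ≤ j) (hjn : j ≤ n) {g : Fin 4} {i : Fin n}
    {c : Fin (n + 1)} (hc : 1 ≤ (c : ℕ))
    (h : ReflTransGen (StageTight A Q j L) (.inl (g, i, c)) (.inr (.inr z))) :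
    (∃ (g' : Fin 4) (i' : Fin n), (g' : ℕ) = g + 1 ∧ A i i' ∧
        ReflTransGen (StageTight A Q j L) (.inl (g', i', 0)) (.inr (.inr z))) ∨
      (g : ℕ) = 3 ∧ ∃ p, (pathRank (p, i) : ℕ) = L := by
  generalize hx : (.inl (g, i, c) : Vertex n) = x at h
  induction h using ReflTransGen.head_induction_on generalizing c with
  | refl => cases hx
  | head hxy hyz ih =>
    subst hx
    rcases hxy.of_row hj hjn hc with ⟨c', hc', rfl⟩ | ⟨g', i', hg', hA, rfl⟩ | hsink
    · exact ih hc' rfl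
    · exact .inl ⟨g', i', hg', hA, hyz⟩
    · exact .inr hsink

theorem reach_layer (hj : 1 ≤ j) (hjn : j ≤ n) {g : Fin 4} {i : Fin n}
    (h : ReflTransGen (StageTight A Q j L) (.inl (g, i, 0)) (.inr (.inr z))) :
    Q g j i ∧
      ((∃ (g' : Fin 4) (i' : Fin n), (g' : ℕ) = g + 1 ∧ A i i' ∧
          ReflTransGen (StageTight A Q j L) (.inl (g', i', 0)) (.inr (.inr z))) ∨
        (g : ℕ) = 3 ∧ ∃ p, (pathRank (p, i) : ℕ) = L) := by
  rcases h.cases_head with h | ⟨y, hxy, hyz⟩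
  · cases h
  obtain ⟨hQ, c, hc, rfl⟩ := hxy.of_entry hj hjn rfl
  exact ⟨hQ, reach_cross_of_reach_row hj hjn (by omega) hyz⟩

theorem exists_triangle_of_reach (hj : 1 ≤ j) (hjn : j ≤ n) {p : Fin n × Fin n}
    (h : ReflTransGen (StageTight A Q j L) (.inr (.inl p)) (.inr (.inr z))) :
    ∃ a' b c : Fin n, (∃ p', (pathRank (p', a') : ℕ) = L) ∧
      Q 0 j a' ∧ Q 1 j b ∧ Q 2 j c ∧ A a' b ∧ A b c ∧ A c a' := by
  obtain ⟨a', ⟨p₀, hp₀⟩, h₀⟩ := reach_entry_of_reach_source hj h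
  obtain ⟨hQ₀, ⟨g₁, b, hg₁, hab, h₁⟩ | ⟨⟨⟩, -⟩⟩ := reach_layer hj hjn h₀
  obtain rfl : g₁ = 1 := Fin.ext hg₁
  obtain ⟨hQ₁, ⟨g₂, c, hg₂, hbc, h₂⟩ | ⟨⟨⟩, -⟩⟩ := reach_layer hj hjn h₁
  obtain rfl : g₂ = 2 := Fin.ext hg₂
  obtain ⟨hQ₂, ⟨g₃, d, hg₃, hcd, h₃⟩ | ⟨⟨⟩, -⟩⟩ := reach_layer hj hjn h₂
  obtain rfl : g₃ = 3 := Fin.ext hg₃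
  obtain ⟨-, ⟨g₄, -, hg₄, -⟩ | ⟨-, p₃, hp₃⟩⟩ := reach_layer hj hjn h₃
  · exact absurd g₄.isLt (by simp [hg₄])
  obtain rfl : d = a' := congrArg Prod.snd (pathRank.injective (Fin.ext (hp₃.trans hp₀.symm)))
  exact ⟨d, b, c, ⟨p₀, hp₀⟩, hQ₀, hQ₁, hQ₂, hab, hbc, hcd⟩

end Reach

theorem StageEdge.adj {x y : Vertex n} (h : StageEdge A Q j L x y) :
    (stageGraph A Q j L).Adj x y := by
  refine (SimpleGraph.fromRel_adj _ _ _).mpr ⟨?_, .inl h⟩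
  cases h with
  | gadget e =>
    cases e with
    | path | query | cross => simp [Fin.ext_iff]; omega
  | source | sink => rintro ⟨⟩; omega
  | sourceLink | sinkLink => simp

theorem edist_le_of_pathRank_le (ι : Fin n × Fin n → Vertex n)
    (hι : ∀ p q, (pathRank q : ℕ) + 1 = pathRank p → StageEdge A Q j L (ι p) (ι q))
    {p q : Fin n × Fin n} (hpq : (pathRank q : ℕ) ≤ pathRank p) :
    (stageGraph A Q j L).edist (ι q) (ι p) ≤ ((pathRank p : ℕ) - pathRank q : ℕ) := by
  let φ (k : ℕ) : Vertex n :=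
    ι (pathRank.symm ⟨min (pathRank q + k) (pathRank p), by omega⟩)
  convert SimpleGraph.edist_le_of_adj_succ φ ((pathRank p : ℕ) - pathRank q) fun k hk =>
    (hι _ _ (by simp; omega)).adj.symm using 2
  · simp [φ, min_eq_left hpq]
  · simp [φ, show (pathRank q : ℕ) + (pathRank p - pathRank q) = pathRank p by omega]

theorem edist_row_le {g : Fin 4} {i : Fin n} {c c' : Fin (n + 1)} (hc : 1 ≤ (c : ℕ))
    (hcc' : (c : ℕ) ≤ c') :
    (stageGraph A Q j L).edist (.inl (g, i, c)) (.inl (g, i, c')) ≤ ((c' : ℕ) - c : ℕ) := by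
  let φ (k : ℕ) : Vertex n := .inl (g, i, ⟨min (c + k) c', by omega⟩)
  convert SimpleGraph.edist_le_of_adj_succ φ ((c' : ℕ) - c) fun k hk =>
    (StageEdge.gadget (.path (by simp; omega) (by simp; omega))).adj using 2
  · simp [φ, min_eq_left hcc']
  · simp [φ, show (c : ℕ) + (c' - c) = c' by omega]

theorem edist_layer_le (hj : 1 ≤ j) (hjn : j ≤ n) {g : Fin 4} {i : Fin n} (hQ : Q g j i) :
    (stageGraph A Q j L).edist (.inl (g, i, 0)) (.inl (g, i, Fin.last n)) ≤
      (1 + (n - j) : ℕ) := by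
  let cj : Fin (n + 1) := ⟨j, by omega⟩
  push_cast
  refine SimpleGraph.edist_le_add (v := .inl (g, i, cj)) ?_ ?_
  · exact (StageEdge.gadget (.query (c' := cj) rfl hj le_rfl hQ)).adj.edist_le_one
  · exact edist_row_le hj (by simp [cj]; omega)

theorem edist_le_of_triangle (hj : 1 ≤ j) (hjn : j ≤ n) {o p : Fin n × Fin n}
    (ho : (pathRank o : ℕ) = 0) (hp : (pathRank p : ℕ) = L) {b c : Fin n}
    (hQ₀ : Q 0 j p.2) (hQ₁ : Q 1 j b) (hQ₂ : Q 2 j c) (hQ₃ : Q 3 j p.2)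
    (hab : A p.2 b) (hbc : A b c) (hca : A c p.2) :
    (stageGraph A Q j L).edist (.inr (.inl o)) (.inr (.inr o)) ≤
      (2 * L + 4 * (n - j + 2) + 1 : ℕ) := by
  have hsource := edist_le_of_pathRank_le (A := A) (Q := Q) (j := j) (L := L) (.inr ∘ .inl)
    (fun _ _ h => .source h) (show (pathRank o : ℕ) ≤ pathRank p by omega)
  have hsink := edist_le_of_pathRank_le (A := A) (Q := Q) (j := j) (L := L) (.inr ∘ .inr)
    (fun _ _ h => .sink h) (show (pathRank o : ℕ) ≤ pathRank p by omega)
  rw [SimpleGraph.edist_comm] at hsink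
  have hcross {g g' : Fin 4} {i i' : Fin n} (hg : (g' : ℕ) = g + 1) (hA : A i i') :=
    (StageEdge.gadget (Q := Q) (j := j) (L := L)
      (.cross (c := Fin.last n) (c' := 0) hg rfl rfl hA)).adj.edist_le_one
  calc _ ≤ _ := SimpleGraph.edist_le_add hsource <|
        SimpleGraph.edist_le_add (StageEdge.sourceLink rfl rfl hp.ge).adj.edist_le_one <|
        SimpleGraph.edist_le_add (edist_layer_le hj hjn hQ₀) <|
        SimpleGraph.edist_le_add (hcross (g' := 1) rfl hab) <|
        SimpleGraph.edist_le_add (edist_layer_le hj hjn hQ₁) <|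
        SimpleGraph.edist_le_add (hcross (g' := 2) rfl hbc) <|
        SimpleGraph.edist_le_add (edist_layer_le hj hjn hQ₂) <|
        SimpleGraph.edist_le_add (hcross (g' := 3) rfl hca) <|
        SimpleGraph.edist_le_add (edist_layer_le hj hjn hQ₃) <|
        SimpleGraph.edist_le_add
          (StageEdge.sinkLink (c := Fin.last n) rfl rfl hp.ge).adj.symm.edist_le_one hsink
    _ = _ := by norm_cast; omega

theorem le_edist (hj : 1 ≤ j) (hjn : j ≤ n) {o : Fin n × Fin n} (ho : (pathRank o : ℕ) = 0) :
    ((2 * L + 4 * (n - j + 2) + 1 : ℕ) : ℕ∞) ≤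
      (stageGraph A Q j L).edist (.inr (.inl o)) (.inr (.inr o)) := by
  simpa [potential, ho] using SimpleGraph.le_add_edist (fun _ _ h => potential_adj_le hj hjn h)
    (.inr (.inl o)) (.inr (.inr o))

theorem exists_triangle_of_edist_eq (hj : 1 ≤ j) (hjn : j ≤ n) {o : Fin n × Fin n}
    (ho : (pathRank o : ℕ) = 0)
    (h : (stageGraph A Q j L).edist (.inr (.inl o)) (.inr (.inr o)) =
      (2 * L + 4 * (n - j + 2) + 1 : ℕ)) :
    ∃ a' b c : Fin n, (∃ p, (pathRank (p, a') : ℕ) = L) ∧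
      Q 0 j a' ∧ Q 1 j b ∧ Q 2 j c ∧ A a' b ∧ A b c ∧ A c a' :=
  exists_triangle_of_reach hj hjn <|
    SimpleGraph.reflTransGen_tightAdj_of_edist_eq (fun _ _ h => potential_adj_le hj hjn h) h
      (by simp [potential, ho])

end OMv3Reduction

/-- Claim 2 of the OMv3 reduction: in the graph `G_{j,a}` obtained from the
query-gadget graph (with query index `j`) by adding the source path of
vertices `s_{p,b}`, the sink path of vertices `t_{p,b}`, and the connection
edges `s_{p,b} ~ (0,b,0)` and `t_{p,b} ~ (3,b,n)` for all `(p,b)` with `p < j`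
or (`p = j` and `b ≤ a`), the extended distance from `s_{n,n}` to `t_{n,n}` is
at least `2n(n−j) + 2(n−a+1) + 3 + 4(n+1−j)`, with equality iff there are
`b, c` with `U j a ∧ V j b ∧ W j c ∧ A a b ∧ A b c ∧ A c a`. -/
theorem omv3_reduction_stage_distance (n : ℕ) (hn : 1 ≤ n)
    (A : Fin n → Fin n → Prop) (U Vq Wq : ℕ → Fin n → Prop)
    (j a : ℕ) (hj1 : 1 ≤ j) (hjn : j ≤ n) (ha1 : 1 ≤ a) (han : a ≤ n)
    (Gja : SimpleGraph ((Fin 4 × Fin n × Fin (n + 1)) ⊕ ((Fin n × Fin n) ⊕ (Fin n × Fin n))))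
    (hG : Gja = SimpleGraph.fromRel (fun x y =>
      -- gadget edges, with current query index `j`
      (∃ x' y' : Fin 4 × Fin n × Fin (n + 1), x = Sum.inl x' ∧ y = Sum.inl y' ∧
        ((x'.1 = y'.1 ∧ x'.2.1 = y'.2.1 ∧ 1 ≤ (x'.2.2 : ℕ) ∧
            (y'.2.2 : ℕ) = (x'.2.2 : ℕ) + 1) ∨
         (x'.1 = y'.1 ∧ x'.2.1 = y'.2.1 ∧ (x'.2.2 : ℕ) = 0 ∧ 1 ≤ (y'.2.2 : ℕ) ∧
            (y'.2.2 : ℕ) ≤ j ∧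
            (((x'.1 : ℕ) = 0 ∨ (x'.1 : ℕ) = 3) → U (y'.2.2 : ℕ) x'.2.1) ∧
            ((x'.1 : ℕ) = 1 → Vq (y'.2.2 : ℕ) x'.2.1) ∧
            ((x'.1 : ℕ) = 2 → Wq (y'.2.2 : ℕ) x'.2.1)) ∨
         ((y'.1 : ℕ) = (x'.1 : ℕ) + 1 ∧ (x'.2.2 : ℕ) = n ∧ (y'.2.2 : ℕ) = 0 ∧
            A x'.2.1 y'.2.1))) ∨
      -- source path edges (lexicographic order)
      (∃ p q : Fin n × Fin n, x = Sum.inr (Sum.inl p) ∧ y = Sum.inr (Sum.inl q) ∧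
        ((p.1 = q.1 ∧ (q.2 : ℕ) = (p.2 : ℕ) + 1) ∨
         ((p.2 : ℕ) = n - 1 ∧ (q.2 : ℕ) = 0 ∧ (q.1 : ℕ) = (p.1 : ℕ) + 1))) ∨
      -- sink path edges (lexicographic order)
      (∃ p q : Fin n × Fin n, x = Sum.inr (Sum.inr p) ∧ y = Sum.inr (Sum.inr q) ∧
        ((p.1 = q.1 ∧ (q.2 : ℕ) = (p.2 : ℕ) + 1) ∨
         ((p.2 : ℕ) = n - 1 ∧ (q.2 : ℕ) = 0 ∧ (q.1 : ℕ) = (p.1 : ℕ) + 1))) ∨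
      -- connection edges to the source path
      (∃ pb : Fin n × Fin n, x = Sum.inr (Sum.inl pb) ∧
        y = Sum.inl (⟨0, by omega⟩, pb.2, ⟨0, by omega⟩) ∧
        ((pb.1 : ℕ) + 1 < j ∨ ((pb.1 : ℕ) + 1 = j ∧ (pb.2 : ℕ) + 1 ≤ a))) ∨
      -- connection edges to the sink path
      (∃ pb : Fin n × Fin n, x = Sum.inr (Sum.inr pb) ∧
        y = Sum.inl (⟨3, by omega⟩, pb.2, ⟨n, by omega⟩) ∧
        ((pb.1 : ℕ) + 1 < j ∨ ((pb.1 : ℕ) + 1 = j ∧ (pb.2 : ℕ) + 1 ≤ a))))) :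
    (((2 * n * (n - j) + 2 * (n - a + 1) + 3 + 4 * (n + 1 - j) : ℕ) : ℕ∞) ≤
        Gja.edist (Sum.inr (Sum.inl (⟨n - 1, by omega⟩, ⟨n - 1, by omega⟩)))
          (Sum.inr (Sum.inr (⟨n - 1, by omega⟩, ⟨n - 1, by omega⟩)))) ∧
      (Gja.edist (Sum.inr (Sum.inl (⟨n - 1, by omega⟩, ⟨n - 1, by omega⟩)))
          (Sum.inr (Sum.inr (⟨n - 1, by omega⟩, ⟨n - 1, by omega⟩))) =
          ((2 * n * (n - j) + 2 * (n - a + 1) + 3 + 4 * (n + 1 - j) : ℕ) : ℕ∞) ↔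
        ∃ b c : Fin n, U j ⟨a - 1, by omega⟩ ∧ Vq j b ∧ Wq j c ∧
          A ⟨a - 1, by omega⟩ b ∧ A b c ∧ A c ⟨a - 1, by omega⟩) := by
  open OMv3Reduction in
  obtain rfl : Gja = stageGraph A ![U, Vq, Wq, U] j (pivotRank n j a) :=
    hG.trans (fromRel_eq_stageGraph A U Vq Wq hjn ha1)
  have ho : (pathRank ((⟨n - 1, by omega⟩, ⟨n - 1, by omega⟩) : Fin n × Fin n) : ℕ) = 0 := by
    simp [pathRank_val]
  have hpivot : (pathRank ((⟨j - 1, by omega⟩, ⟨a - 1, by omega⟩) : Fin n × Fin n) : ℕ) =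
      pivotRank n j a := by
    simp [pathRank_val, pivotRank, show n - 1 - (j - 1) = n - j by omega,
      show n - 1 - (a - 1) = n - a by omega]
  rw [show 2 * n * (n - j) + 2 * (n - a + 1) + 3 + 4 * (n + 1 - j) =
    2 * pivotRank n j a + 4 * (n - j + 2) + 1 by rw [pivotRank, mul_assoc]; omega]
  have hlow := le_edist (A := A) (Q := ![U, Vq, Wq, U]) (L := pivotRank n j a) hj1 hjn ho
  refine ⟨hlow, fun h => ?_, fun ⟨b, c, hU, hV, hW, hab, hbc, hca⟩ => le_antisymm ?_ hlow⟩
  · obtain ⟨a', b, c, ⟨p, hp⟩, hU, hV, hW, hab, hbc, hca⟩ :=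
      exists_triangle_of_edist_eq hj1 hjn ho h
    have ha' : a' = ⟨a - 1, by omega⟩ := Fin.ext (snd_eq_of_pathRank_eq_pivotRank ha1 han hp)
    rw [← ha']
    exact ⟨b, c, hU, hV, hW, hab, hbc, hca⟩
  · exact edist_le_of_triangle hj1 hjn ho hpivot hU hV hW hU hab hbc hca
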